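/- arXiv:1109.3804 — 3 statements merged into one kernel-verified Lean document; each statement's English description precedes it below -/
import Mathlib

section
/- Let A and B be positive definite n×n complex matrices. Then for every s ∈ [0,1], (1/2)(Tr A + Tr B − Tr |A−B|) ≤ Tr(A^{1−s} B^{s}). -/
open scoped ComplexOrder

/-- Functional calculus for Hermitian matrices (junk value `0` off the Hermitian matrices). -/
noncomputable def cfcM {d : ℕ} (f : ℝ → ℝ) (A : Matrix (Fin d) (Fin d) ℂ) :
    Matrix (Fin d) (Fin d) ℂ :=
  if h : A.IsHermitian then
    (h.eigenvectorUnitary : Matrix (Fin d) (Fin d) ℂ) *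
      Matrix.diagonal (fun i => (f (h.eigenvalues i) : ℂ)) *
      (star (h.eigenvectorUnitary : Matrix (Fin d) (Fin d) ℂ))
  else 0

/-- Real power of a (positive) Hermitian matrix via functional calculus. -/
noncomputable def mpow {d : ℕ} (A : Matrix (Fin d) (Fin d) ℂ) (s : ℝ) :
    Matrix (Fin d) (Fin d) ℂ := cfcM (fun x => x ^ s) A

/-- Absolute value of a Hermitian matrix via functional calculus. -/
noncomputable def matAbs {d : ℕ} (A : Matrix (Fin d) (Fin d) ℂ) :
    Matrix (Fin d) (Fin d) ℂ := cfcM (fun x => |x|) A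

/-! Put `C := B + (A - B)⁺`, so that `A ≤ C` and `B ≤ C`. By the Löwner–Heinz theorem
(`X ↦ X ^ t` is operator monotone for `t ∈ [0, 1]`) we get `A ^ t ≤ C ^ t` and `B ^ t ≤ C ^ t`,
and the trace of a product of two positive semidefinite matrices is nonnegative. The three
nonnegative traces `Tr (A ^ (1 - s) (C ^ s - A ^ s))`,
`Tr ((C ^ (1 - s) - A ^ (1 - s)) (C ^ s - B ^ s))` and `Tr ((C ^ (1 - s) - B ^ (1 - s)) B ^ s)`
add up to `Tr (A ^ (1 - s) B ^ s) + Tr C - Tr A - Tr B`, which gives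
`Tr A - Tr (A - B)⁺ ≤ Tr (A ^ (1 - s) B ^ s)`; finally `|A - B| + (A - B) = 2 (A - B)⁺`. -/

open Matrix
open scoped MatrixOrder Matrix.Norms.L2Operator

lemma cfcM_eq_cfc {d : ℕ} {A : Matrix (Fin d) (Fin d) ℂ} (hA : A.IsHermitian) (f : ℝ → ℝ) :
    cfcM f A = cfc f A := by
  rw [cfcM, dif_pos hA, hA.cfc_eq, IsHermitian.cfc, Unitary.conjStarAlgAut_apply]
  rfl

lemma mpow_eq_rpow {d : ℕ} {A : Matrix (Fin d) (Fin d) ℂ} (hA : A.PosSemidef) (s : ℝ) :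
    mpow A s = A ^ s := by
  rw [mpow, cfcM_eq_cfc hA.isHermitian, CFC.rpow_eq_cfc_real hA.nonneg]

lemma matAbs_eq_abs {d : ℕ} {A : Matrix (Fin d) (Fin d) ℂ} (hA : A.IsHermitian) :
    matAbs A = CFC.abs A := by
  rw [matAbs, cfcM_eq_cfc hA, CFC.abs_eq_cfc_norm A hA.isSelfAdjoint]
  rfl

namespace Matrix

variable {n : Type*} [Fintype n] [DecidableEq n]

lemma re_trace_abs_add_re_trace {X : Matrix n n ℂ} (hX : X.IsHermitian) :
    (CFC.abs X).trace.re + X.trace.re = 2 * (X⁺).trace.re := by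
  rw [← Complex.add_re, ← trace_add, CFC.abs_add_self X hX.isSelfAdjoint, trace_smul,
    Complex.smul_re, nsmul_eq_mul, Nat.cast_ofNat]

lemma re_trace_mul_nonneg {P Q : Matrix n n ℂ} (hP : 0 ≤ P) (hQ : 0 ≤ Q) :
    0 ≤ (P * Q).trace.re := by
  have hconj := (nonneg_iff_posSemidef.mp hQ).mul_mul_conjTranspose_same (CFC.sqrt P)
  rw [(nonneg_iff_posSemidef.mp (CFC.sqrt_nonneg P)).isHermitian.eq] at hconj
  rw [← CFC.sqrt_mul_sqrt_self P hP, mul_assoc, trace_mul_comm]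
  exact (RCLike.nonneg_iff.mp hconj.trace_nonneg).1

lemma re_trace_sub_posPart_le_re_trace_rpow_mul_rpow {A B : Matrix n n ℂ}
    (hA : A.PosDef) (hB : B.PosDef) {s : ℝ} (hs : s ∈ Set.Icc (0 : ℝ) 1) :
    A.trace.re - ((A - B)⁺).trace.re ≤ (A ^ (1 - s) * B ^ s).trace.re := by
  set C := B + (A - B)⁺ with hC
  have hAC : A ≤ C := by
    rw [hC, ← sub_le_iff_le_add']
    exact CFC.le_posPart (hA.isHermitian.sub hB.isHermitian).isSelfAdjoint
  have hBC : B ≤ C := le_add_of_nonneg_right (CFC.posPart_nonneg _)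
  have hCpd : C.PosDef := hB.add_posSemidef (nonneg_iff_posSemidef.mp (CFC.posPart_nonneg _))
  have hs' : 1 - s ∈ Set.Icc (0 : ℝ) 1 := ⟨by linarith [hs.2], by linarith [hs.1]⟩
  have rpow_split (X : Matrix n n ℂ) (hX : X.PosDef) : X ^ (1 - s) * X ^ s = X := by
    rw [← CFC.rpow_add hX.isUnit, sub_add_cancel, CFC.rpow_one X hX.posSemidef.nonneg]
  have h1 := re_trace_mul_nonneg (CFC.rpow_nonneg (a := A) (y := 1 - s))
    (sub_nonneg.mpr (CFC.rpow_le_rpow hs hAC))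
  have h2 := re_trace_mul_nonneg (sub_nonneg.mpr (CFC.rpow_le_rpow hs' hAC))
    (sub_nonneg.mpr (CFC.rpow_le_rpow hs hBC))
  have h3 := re_trace_mul_nonneg (sub_nonneg.mpr (CFC.rpow_le_rpow hs' hBC))
    (CFC.rpow_nonneg (a := B) (y := s))
  rw [mul_sub, trace_sub, rpow_split A hA] at h1
  rw [sub_mul, mul_sub, mul_sub, trace_sub, trace_sub, trace_sub, rpow_split C hCpd] at h2
  rw [sub_mul, trace_sub, rpow_split B hB] at h3
  have htrC : C.trace.re = B.trace.re + ((A - B)⁺).trace.re := by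
    rw [hC, trace_add, Complex.add_re]
  simp only [Complex.sub_re] at h1 h2 h3
  linarith

end Matrix

/-- For positive definite `A`, `B` on `ℂ^n` and `s ∈ [0,1]`:
`(1/2)(Tr A + Tr B − Tr|A−B|) ≤ Tr (A^{1−s} B^{s})`. -/
theorem trace_abs_le_trace_rpow_mul_rpow {n : ℕ}
    (A B : Matrix (Fin n) (Fin n) ℂ) (hA : A.PosDef) (hB : B.PosDef)
    (s : ℝ) (hs : s ∈ Set.Icc (0 : ℝ) 1) :
    (1 / 2 : ℝ) * ((A.trace).re + (B.trace).re - ((matAbs (A - B)).trace).re)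
      ≤ ((mpow A (1 - s) * mpow B s).trace).re := by
  have hAB : (A - B).IsHermitian := hA.isHermitian.sub hB.isHermitian
  have habs := re_trace_abs_add_re_trace hAB
  rw [trace_sub, Complex.sub_re] at habs
  rw [matAbs_eq_abs hAB, mpow_eq_rpow hA.posSemidef, mpow_eq_rpow hB.posSemidef]
  linarith [re_trace_sub_posPart_le_re_trace_rpow_mul_rpow hA hB hs]
end

section
/- Let e: [0,1] → ℝ be convex continuous, φ(θ) = sup_{s∈[0,1]}(θs − e(s)), φ̂(θ) = φ(θ) − θ, and for r ≥ −e(1) define ψ(r) = −φ(φ̂^{-1}(r)) where φ̂^{-1} is the inverse of the strictly decreasing restriction of φ̂ to (−∞, D⁻e(1)]. Then ψ(r) = − sup_{s∈[0,1)} (−sr − e(s))/(1 − s). -/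
/-- Fenchel–Legendre transform of a function `e` on `[0,1]`. -/
noncomputable def flt (e : ℝ → ℝ) (θ : ℝ) : ℝ :=
  sSup ((fun s => θ * s - e s) '' Set.Icc (0 : ℝ) 1)

/-- For `e` convex continuous on `[0,1]`, with `φ̂(θ) = φ(θ) − θ` strictly decreasing from
`(−∞, D⁻e(1)]` onto `[−e(1), ∞)`, the function `ψ(r) = −φ(φ̂⁻¹(r))` has the variational
characterization `ψ(r) = − sup_{0 ≤ s < 1} (−sr − e(s))/(1−s)`.  (Stated via an arbitrary
`θ = φ̂⁻¹(r)`, i.e. `θ ≤ D⁻e(1)` with `φ̂(θ) = r`.) -/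
theorem psi_variational (e : ℝ → ℝ)
    (hconv : ConvexOn ℝ (Set.Icc (0 : ℝ) 1) e)
    (hcont : ContinuousOn e (Set.Icc (0 : ℝ) 1))
    (db : ℝ) (hdb : HasDerivWithinAt e db (Set.Iic 1) 1)
    (r θ : ℝ) (hr : -e 1 ≤ r) (hθ : θ ≤ db) (hθr : flt e θ - θ = r) :
    -(flt e θ) = -sSup ((fun s => (-(s * r) - e s) / (1 - s)) '' Set.Ico (0 : ℝ) 1) := by
  subst hθr
  congr 1
  -- the max of s ↦ θ s - e s on [0,1]
  have hScont : ContinuousOn (fun s => θ * s - e s) (Set.Icc (0:ℝ) 1) :=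
    (continuousOn_const.mul continuousOn_id).sub hcont
  obtain ⟨a, haS, hamax⟩ := isCompact_Icc.exists_isMaxOn
    ⟨0, by norm_num⟩ hScont
  have hgr : IsGreatest ((fun s => θ * s - e s) '' Set.Icc (0:ℝ) 1) (θ * a - e a) :=
    ⟨⟨a, haS, rfl⟩, by rintro _ ⟨s, hs, rfl⟩; exact hamax hs⟩
  have hφ : flt e θ = θ * a - e a := hgr.csSup_eq
  have hle : ∀ s ∈ Set.Icc (0:ℝ) 1, θ * s - e s ≤ flt e θ := by
    intro s hs; rw [hφ]; exact hamax hs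
  -- upper bound for the Ico-sup
  have hub : ∀ x ∈ (fun s => (-(s * (flt e θ - θ)) - e s) / (1 - s)) '' Set.Ico (0:ℝ) 1,
      x ≤ flt e θ := by
    rintro _ ⟨s, hs, rfl⟩
    have h1s : 0 < 1 - s := by linarith [hs.2]
    rw [div_le_iff₀ h1s]
    have h2 := hle s ⟨hs.1, hs.2.le⟩
    nlinarith
  have hne : ((fun s => (-(s * (flt e θ - θ)) - e s) / (1 - s)) '' Set.Ico (0:ℝ) 1).Nonempty :=
    ⟨_, ⟨0, by norm_num, rfl⟩⟩
  have hbdd : BddAbove ((fun s => (-(s * (flt e θ - θ)) - e s) / (1 - s)) '' Set.Ico (0:ℝ) 1) :=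
    ⟨flt e θ, hub⟩
  -- lower bound
  have hlow : flt e θ ≤
      sSup ((fun s => (-(s * (flt e θ - θ)) - e s) / (1 - s)) '' Set.Ico (0:ℝ) 1) := by
    rcases lt_or_eq_of_le haS.2 with ha1 | ha1
    · -- max attained at a < 1
      have h1a : 0 < 1 - a := by linarith
      have hkey : (-(a * (flt e θ - θ)) - e a) / (1 - a) = flt e θ := by
        rw [div_eq_iff (ne_of_gt h1a), hφ]; ring
      calc flt e θ = (-(a * (flt e θ - θ)) - e a) / (1 - a) := hkey.symm
        _ ≤ _ := le_csSup hbdd ⟨a, ⟨haS.1, ha1⟩, rfl⟩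
    · -- max attained at a = 1 : use the left derivative
      have hφ1 : flt e θ = θ - e 1 := by rw [hφ, ha1]; ring
      have hslope : Filter.Tendsto (slope e 1) (nhdsWithin 1 (Set.Iio 1)) (nhds db) := by
        have h := hasDerivWithinAt_iff_tendsto_slope.mp hdb
        rwa [show Set.Iic (1:ℝ) \ {1} = Set.Iio 1 by
          ext x; simp [lt_iff_le_and_ne]] at h
      apply le_of_forall_pos_le_add
      intro ε hε
      have hev : ∀ᶠ s in nhdsWithin 1 (Set.Iio (1:ℝ)),
          db - ε < slope e 1 s ∧ 0 ≤ s ∧ s < 1 := by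
        filter_upwards [hslope.eventually (eventually_gt_nhds (by linarith : db - ε < db)),
          eventually_nhdsWithin_of_eventually_nhds
            (eventually_ge_nhds (by norm_num : (0:ℝ) < 1)),
          self_mem_nhdsWithin] with s h1 h2 h3
        exact ⟨h1, h2, h3⟩
      obtain ⟨s, hs1, hs0, hs2⟩ := hev.exists
      have h1s : 0 < 1 - s := by linarith
      have hq : slope e 1 s = (e s - e 1) / (s - 1) := by
        rw [slope_def_field]
      rw [hq] at hs1
      have hkey : e s - e 1 < (db - ε) * (s - 1) :=
        (lt_div_iff_of_neg (by linarith : s - (1:ℝ) < 0)).mp hs1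
      have hgs : flt e θ - ε ≤ (-(s * (flt e θ - θ)) - e s) / (1 - s) := by
        rw [le_div_iff₀ h1s, hφ1]
        nlinarith
      calc flt e θ = (flt e θ - ε) + ε := by ring
        _ ≤ (-(s * (flt e θ - θ)) - e s) / (1 - s) + ε := by linarith
        _ ≤ _ + ε := by
            gcongr
            exact le_csSup hbdd ⟨s, ⟨hs0, hs2⟩, rfl⟩
  exact le_antisymm hlow (csSup_le hne hub)
end

section
/- Let ν, ω be positive definite matrices on a finite dimensional Hilbert space ℂ^n with spectral decompositions ν = Σ_λ λ P_λ(ν), ω = Σ_μ μ P_μ(ω). Then D(ν,ω) = inf_T [Tr(νT) + Tr(ω(1−T))] over projections T satisfies D(ν,ω) ≥ Σ_{λ,μ} Tr(P_λ(ν) P_μ(ω)) / (λ^{-1} + μ^{-1}). -/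
/-!
In the eigenbases `uᵢ` of `ν` and `vⱼ` of `ω` put `aⱼᵢ = ⟨vⱼ, T uᵢ⟩` and `bⱼᵢ = ⟨vⱼ, (1 - T) uᵢ⟩`,
so that `aⱼᵢ + bⱼᵢ = ⟨vⱼ, uᵢ⟩` and `Tr(Pᵢ(ν) Qⱼ(ω)) = |aⱼᵢ + bⱼᵢ|²`. As `T` and `1 - T` are
orthogonal projections, `Tr(ν T) = Σᵢ λᵢ ‖T uᵢ‖² = Σᵢ λᵢ Σⱼ |aⱼᵢ|²` by Parseval, and likewise
`Tr(ω (1 - T)) = Σⱼ μⱼ Σᵢ |bⱼᵢ|²`. The bound then holds term by term by the weighted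
Cauchy–Schwarz inequality `|a + b|² ≤ (λ⁻¹ + μ⁻¹) (λ |a|² + μ |b|²)`.
-/

open scoped ComplexOrder

/-- Rank-one spectral projection of a Hermitian matrix onto its `i`-th eigenvector. -/
noncomputable def specProj {d : ℕ} {A : Matrix (Fin d) (Fin d) ℂ}
    (hA : A.IsHermitian) (i : Fin d) : Matrix (Fin d) (Fin d) ℂ :=
  (hA.eigenvectorUnitary : Matrix (Fin d) (Fin d) ℂ) *
    Matrix.diagonal (fun k => if k = i then (1 : ℂ) else 0) *
    (star (hA.eigenvectorUnitary : Matrix (Fin d) (Fin d) ℂ))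

lemma add_sq_div_inv_add_inv_le {l m : ℝ} (hl : 0 < l) (hm : 0 < m) (x y : ℝ) :
    (x + y) ^ 2 / (l⁻¹ + m⁻¹) ≤ l * x ^ 2 + m * y ^ 2 := by
  have hgap : (l * x ^ 2 + m * y ^ 2) * (l⁻¹ + m⁻¹) - (x + y) ^ 2 =
      (l * x - m * y) ^ 2 / (l * m) := by
    field_simp
    ring
  rw [div_le_iff₀ (by positivity)]
  linarith [hgap, div_nonneg (sq_nonneg (l * x - m * y)) (mul_pos hl hm).le]

lemma norm_add_sq_div_inv_add_inv_le {E : Type*} [SeminormedAddGroup E] {l m : ℝ}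
    (hl : 0 < l) (hm : 0 < m) (a b : E) :
    ‖a + b‖ ^ 2 / (l⁻¹ + m⁻¹) ≤ l * ‖a‖ ^ 2 + m * ‖b‖ ^ 2 :=
  calc ‖a + b‖ ^ 2 / (l⁻¹ + m⁻¹) ≤ (‖a‖ + ‖b‖) ^ 2 / (l⁻¹ + m⁻¹) := by
        gcongr; exact norm_add_le a b
    _ ≤ l * ‖a‖ ^ 2 + m * ‖b‖ ^ 2 := add_sq_div_inv_add_inv_le hl hm _ _

namespace IsStarProjection

variable {R : Type*} [Monoid R] [StarMul R] {p : R}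

lemma star_mul_mul_eq_star_mul_self (hp : IsStarProjection p) {v : R} (hv : v * star v = 1)
    (u : R) :
    star u * p * u = star (star v * p * u) * (star v * p * u) := by
  have hps : star p = p := hp.isSelfAdjoint
  simp only [star_mul, star_star, hps, mul_assoc]
  rw [← mul_assoc v, hv, one_mul, ← mul_assoc p, hp.isIdempotentElem.eq]

lemma star_mul_mul_eq_mul_star_self (hp : IsStarProjection p) {u : R} (hu : u * star u = 1)
    (v : R) :
    star v * p * v = (star v * p * u) * star (star v * p * u) := by
  have hps : star p = p := hp.isSelfAdjoint
  simp only [star_mul, star_star, hps, mul_assoc]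
  rw [← mul_assoc u, hu, one_mul, ← mul_assoc p, hp.isIdempotentElem.eq]

end IsStarProjection

namespace Matrix

variable {𝕜 m n : Type*} [RCLike 𝕜] [Fintype m]

lemma conjTranspose_mul_self_apply_self (X : Matrix m n 𝕜) (i : n) :
    (Xᴴ * X) i i = ∑ j, ((‖X j i‖ ^ 2 : ℝ) : 𝕜) := by
  simp [mul_apply, RCLike.conj_mul]

lemma mul_conjTranspose_self_apply_self (X : Matrix n m 𝕜) (i : n) :
    (X * Xᴴ) i i = ∑ j, ((‖X i j‖ ^ 2 : ℝ) : 𝕜) := by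
  simp [mul_apply, RCLike.mul_conj]

variable [Fintype n] [DecidableEq n]

lemma IsHermitian.trace_mul_eq_sum_eigenvalues {A : Matrix n n 𝕜} (hA : A.IsHermitian)
    (X : Matrix n n 𝕜) :
    (A * X).trace = ∑ i, (hA.eigenvalues i : 𝕜) *
      (star (hA.eigenvectorUnitary : Matrix n n 𝕜) * X * hA.eigenvectorUnitary) i i := by
  set U := (hA.eigenvectorUnitary : Matrix n n 𝕜)
  have hdiag : star U * A * U = diagonal (RCLike.ofReal ∘ hA.eigenvalues) := by
    simpa [Unitary.conjStarAlgAut_star_apply, mul_assoc] using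
      hA.conjStarAlgAut_star_eigenvectorUnitary
  have hUU : U * star U = 1 := Unitary.coe_mul_star_self _
  calc (A * X).trace = (star U * (A * X) * U).trace := by
        rw [trace_mul_cycle, hUU, one_mul]
    _ = (diagonal (RCLike.ofReal ∘ hA.eigenvalues) * (star U * X * U)).trace := by
        rw [← hdiag]
        simp only [mul_assoc]
        rw [← mul_assoc U (star U), hUU, one_mul]
    _ = _ := by simp [trace, diagonal_mul]

lemma IsHermitian.re_trace_mul_eq_sum_norm_sq_col {A P V : Matrix n n 𝕜} (hA : A.IsHermitian)
    (hP : IsStarProjection P) (hV : V ∈ unitary (Matrix n n 𝕜)) :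
    RCLike.re (A * P).trace = ∑ i, hA.eigenvalues i *
      ∑ j, ‖(star V * P * hA.eigenvectorUnitary) j i‖ ^ 2 := by
  rw [hA.trace_mul_eq_sum_eigenvalues,
    hP.star_mul_mul_eq_star_mul_self (Unitary.mul_star_self_of_mem hV),
    star_eq_conjTranspose (star V * P * _)]
  simp only [conjTranspose_mul_self_apply_self]
  simp

lemma IsHermitian.re_trace_mul_eq_sum_norm_sq_row {A P U : Matrix n n 𝕜} (hA : A.IsHermitian)
    (hP : IsStarProjection P) (hU : U ∈ unitary (Matrix n n 𝕜)) :
    RCLike.re (A * P).trace = ∑ j, hA.eigenvalues j *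
      ∑ i, ‖(star (hA.eigenvectorUnitary : Matrix n n 𝕜) * P * U) j i‖ ^ 2 := by
  rw [hA.trace_mul_eq_sum_eigenvalues,
    hP.star_mul_mul_eq_mul_star_self (Unitary.mul_star_self_of_mem hU),
    star_eq_conjTranspose (_ * P * U)]
  simp only [mul_conjTranspose_self_apply_self]
  simp

end Matrix

lemma trace_specProj_mul {d : ℕ} {A : Matrix (Fin d) (Fin d) ℂ} (hA : A.IsHermitian) (i : Fin d)
    (X : Matrix (Fin d) (Fin d) ℂ) :
    (specProj hA i * X).trace =
      (star (hA.eigenvectorUnitary : Matrix (Fin d) (Fin d) ℂ) * X *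
        hA.eigenvectorUnitary) i i := by
  rw [specProj, mul_assoc, mul_assoc, Matrix.trace_mul_comm, mul_assoc]
  simp [Matrix.trace, Matrix.diagonal_mul, mul_assoc]

lemma trace_specProj_mul_specProj {d : ℕ} {A B : Matrix (Fin d) (Fin d) ℂ} (hA : A.IsHermitian)
    (hB : B.IsHermitian) (i j : Fin d) :
    (specProj hA i * specProj hB j).trace =
      ‖(star (hB.eigenvectorUnitary : Matrix (Fin d) (Fin d) ℂ) *
        hA.eigenvectorUnitary) j i‖ ^ 2 := by
  set U := (hA.eigenvectorUnitary : Matrix (Fin d) (Fin d) ℂ)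
  set V := (hB.eigenvectorUnitary : Matrix (Fin d) (Fin d) ℂ)
  have hconj : star U * specProj hB j * U =
      star (star V * U) * Matrix.diagonal (fun k => if k = j then 1 else 0) * (star V * U) := by
    simp only [specProj, U, V, star_mul, star_star, mul_assoc]
  rw [trace_specProj_mul, hconj, Matrix.star_eq_conjTranspose (star V * U)]
  generalize star V * U = M
  simp [Matrix.mul_apply, Matrix.diagonal_apply, RCLike.conj_mul]

/-- Lower bound on the minimal error probability:
for every projection test `T`,
`Σ_{λ,μ} Tr(P_λ(ν) P_μ(ω)) / (λ⁻¹ + μ⁻¹) ≤ Tr(νT) + Tr(ω(1−T))`. -/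
theorem minimal_error_lower_bound {d : ℕ}
    (ν ω : Matrix (Fin d) (Fin d) ℂ) (hν : ν.PosDef) (hω : ω.PosDef)
    (T : Matrix (Fin d) (Fin d) ℂ) (hT : T.IsHermitian) (hTproj : T * T = T) :
    (∑ i : Fin d, ∑ j : Fin d,
        ((specProj hν.1 i * specProj hω.1 j).trace).re /
          ((hν.1.eigenvalues i)⁻¹ + (hω.1.eigenvalues j)⁻¹))
      ≤ ((ν * T).trace + (ω * (1 - T)).trace).re := by
  set U := (hν.1.eigenvectorUnitary : Matrix (Fin d) (Fin d) ℂ)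
  set V := (hω.1.eigenvectorUnitary : Matrix (Fin d) (Fin d) ℂ)
  have hTP : IsStarProjection T := ⟨hTproj, hT⟩
  have hsplit : ∀ i j, (star V * T * U) j i + (star V * (1 - T) * U) j i = (star V * U) j i := by
    intro i j
    rw [← Matrix.add_apply, ← add_mul, ← mul_add, add_sub_cancel, mul_one]
  rw [Complex.add_re, ← RCLike.re_to_complex, ← RCLike.re_to_complex,
    hν.1.re_trace_mul_eq_sum_norm_sq_col hTP hω.1.eigenvectorUnitary.2,
    hω.1.re_trace_mul_eq_sum_norm_sq_row hTP.one_sub hν.1.eigenvectorUnitary.2]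
  calc (∑ i, ∑ j, ((specProj hν.1 i * specProj hω.1 j).trace).re /
          ((hν.1.eigenvalues i)⁻¹ + (hω.1.eigenvalues j)⁻¹))
      = ∑ i, ∑ j, ‖(star V * T * U) j i + (star V * (1 - T) * U) j i‖ ^ 2 /
          ((hν.1.eigenvalues i)⁻¹ + (hω.1.eigenvalues j)⁻¹) := by
        simp only [trace_specProj_mul_specProj, hsplit]; norm_cast
    _ ≤ ∑ i, ∑ j, (hν.1.eigenvalues i * ‖(star V * T * U) j i‖ ^ 2 +
          hω.1.eigenvalues j * ‖(star V * (1 - T) * U) j i‖ ^ 2) := by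
        gcongr with i _ j _
        exact norm_add_sq_div_inv_add_inv_le (hν.eigenvalues_pos i) (hω.eigenvalues_pos j) _ _
    _ = _ := by
        simp only [Finset.sum_add_distrib, Finset.mul_sum]
        rw [Finset.sum_comm (f := fun i j => hω.1.eigenvalues j * _)]
end
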